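/- Fix n ≥ 1 and consider Q_n with the vertices 0 := (0,…,0) and 1 := (1,…,1). Let (ξ_e) be mutually independent rate-1 exponential random variables indexed by the edges of Q_n, and let m_n denote the minimum of X_π over all self-avoiding paths π from 0 to 1 in Q_n. Then for every real x > 0, P(m_n ≤ x) ≤ (1 + x) · sinh(x)^n. -/

import Mathlib

open SimpleGraph MeasureTheory ProbabilityTheory Real

/-- The `n`-dimensional hypercube graph: vertices are `{0,1}^n`, two vertices being adjacent
iff they differ in exactly one coordinate (Hamming distance `1`). -/
def cubeGraph (n : ℕ) : SimpleGraph (Fin n → Bool) where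
  Adj u v := hammingDist u v = 1
  symm := ⟨fun u v (h : hammingDist u v = 1) => (hammingDist_comm v u).trans h⟩
  loopless := ⟨fun u (h : hammingDist u u = 1) => by simp [hammingDist_self] at h⟩

/-- The vertex `0 = (0,…,0)` of the hypercube. -/
def vZero (n : ℕ) : Fin n → Bool := fun _ => false

/-- The vertex `1 = (1,…,1)` of the hypercube. -/
def vOne (n : ℕ) : Fin n → Bool := fun _ => true

open Classical in
/-- The energy `X_π` of a walk `π`, given weights `ξ` on the edges of the hypercube:
the sum of the weights of the edges traversed by `π`. -/
noncomputable def walkEnergy (n : ℕ) (ξ : (cubeGraph n).edgeSet → ℝ)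
    {u v : Fin n → Bool} (p : (cubeGraph n).Walk u v) : ℝ :=
  (p.edges.map (fun e => if h : e ∈ (cubeGraph n).edgeSet then ξ ⟨e, h⟩ else 0)).sum

/-- `m_n`: the minimum of the energy `X_π` over all self-avoiding paths `π` from `0` to `1`
in the hypercube, given weights `ξ` on the edges. -/
noncomputable def minEnergy (n : ℕ) (ξ : (cubeGraph n).edgeSet → ℝ) : ℝ :=
  ⨅ p : {p : (cubeGraph n).Walk (vZero n) (vOne n) // p.IsPath}, walkEnergy n ξ p.1

/-!
Union bound over the self-avoiding paths `π` from `0` to `1`. The weights along `π` are `l_π`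
independent variables with density at most `1` on `[0, ∞)`, so `P(X_π ≤ x)` is at most the volume
`x ^ l_π / l_π!` of a simplex. A path is determined by the word of coordinates it flips, in which
every coordinate occurs an odd number of times. Since at most `ℓ! / ∏ᵢ cᵢ!` words have letter
counts `c`, the sum of `x ^ ℓ / ℓ!` over such words is at most
`∏ᵢ ∑_{k odd} x ^ k / k! = sinh(x) ^ n`.
-/

open Finset
open scoped Nat ENNReal

section WordCount

variable {α : Type*} [Fintype α] [DecidableEq α]

theorem List.sum_count_eq_length (l : List α) : ∑ i, l.count i = l.length := by
  simpa using Multiset.sum_count_eq_card (s := univ) (m := (l : Multiset α)) (by simp)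

theorem card_mul_prod_factorial_le_factorial (S : Finset (List α)) (c : α → ℕ)
    (hS : ∀ s ∈ S, ∀ i, s.count i = c i) : #S * ∏ i, (c i)! ≤ (∑ i, c i)! := by
  induction h : ∑ i, c i generalizing S c with
  | zero =>
    have hnil : S ⊆ {[]} := fun s hs => by
      rw [mem_singleton, ← List.length_eq_zero_iff, ← List.sum_count_eq_length, ← h]
      exact sum_congr rfl fun i _ => hS s hs i
    have hc : ∀ i, c i = 0 := fun i => (sum_eq_zero_iff.1 h) i (mem_univ i)
    simpa [hc] using (card_le_card hnil).trans (card_singleton _).le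
  | succ ℓ ih =>
    -- the tails of the words starting with `i` have letter counts `c - δᵢ`
    let T (i : α) : Finset (List α) := S.preimage (List.cons i) List.cons_injective.injOn
    have hT (i : α) : #(T i) * ∏ j, (c j)! ≤ c i * ℓ ! := by
      rcases (T i).eq_empty_or_nonempty with hTi | ⟨t, ht⟩
      · simp [hTi]
      have hcount (t' : List α) (ht' : t' ∈ T i) (j : α) :
          c j = t'.count j + if j = i then 1 else 0 := by
        rw [← hS _ (mem_preimage.1 ht')]
        simp only [List.count_cons, beq_iff_eq]
        exact congrArg _ (if_congr eq_comm rfl rfl)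
      have hlen : ∑ j, t.count j = ℓ := by
        have := h ▸ sum_congr rfl fun j _ => hcount t ht j
        rw [sum_add_distrib, sum_ite_eq', if_pos (mem_univ i)] at this
        omega
      have hfact (j : α) : (c j)! = (t.count j)! * if j = i then c j else 1 := by
        rw [hcount t ht j]; split_ifs <;> simp [Nat.factorial_succ, mul_comm]
      have hIH := ih (T i) (fun j => t.count j)
        (fun t' ht' j => by have := hcount t' ht' j; rw [hcount t ht j] at this; omega) hlen
      calc #(T i) * ∏ j, (c j)! = c i * (#(T i) * ∏ j, (t.count j)!) := by
            rw [prod_congr rfl fun j _ => hfact j, prod_mul_distrib, prod_ite_eq']; simp; ring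
        _ ≤ c i * ℓ ! := Nat.mul_le_mul_left _ hIH
    have hS_sub : S ⊆ univ.biUnion fun i => (T i).image (List.cons i) := by
      intro s hs
      obtain _ | ⟨i, t⟩ := s
      · exact absurd ((List.sum_count_eq_length []).symm.trans
          (sum_congr rfl fun j _ => hS _ hs j)) (by rw [h]; simp)
      · exact mem_biUnion.2 ⟨i, mem_univ i, mem_image_of_mem _ (mem_preimage.2 hs)⟩
    calc #S * ∏ j, (c j)! ≤ (∑ i, #(T i)) * ∏ j, (c j)! := by
          gcongr
          exact (card_le_card hS_sub).trans (card_biUnion_le.trans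
            (sum_le_sum fun i _ => card_image_le))
      _ ≤ ∑ i, c i * ℓ ! := by rw [sum_mul]; exact sum_le_sum fun i _ => hT i
      _ = (ℓ + 1)! := by rw [← sum_mul, h, Nat.factorial_succ]

theorem sum_pow_length_div_factorial_le_prod {x : ℝ} (hx : 0 ≤ x) (S : Finset (List α))
    (c : α → ℕ) (hS : ∀ s ∈ S, ∀ i, s.count i = c i) :
    ∑ s ∈ S, x ^ s.length / (s.length)! ≤ ∏ i, x ^ c i / (c i)! := by
  have hlen (s) (hs : s ∈ S) : s.length = ∑ i, c i := by
    rw [← List.sum_count_eq_length]; exact sum_congr rfl fun i _ => hS s hs i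
  have hcard : (#S : ℝ) * ∏ i, ((c i)! : ℝ) ≤ (∑ i, c i)! := by
    exact_mod_cast card_mul_prod_factorial_le_factorial S c hS
  rw [sum_congr rfl fun s hs => by rw [hlen s hs], sum_const, nsmul_eq_mul, prod_div_distrib,
    prod_pow_eq_pow_sum, mul_div_assoc', div_le_div_iff₀ (by positivity) (by positivity),
    mul_right_comm, mul_comm (x ^ _)]
  exact mul_le_mul_of_nonneg_right hcard (by positivity)

theorem sum_pow_length_div_factorial_le_pow {x : ℝ} (hx : 0 ≤ x) {K : Set ℕ} {a : ℝ}
    (ha : HasSum (K.indicator fun k => x ^ k / k !) a) (W : Finset (List α))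
    (hW : ∀ w ∈ W, ∀ i, w.count i ∈ K) :
    ∑ w ∈ W, x ^ w.length / (w.length)! ≤ a ^ Fintype.card α := by
  set f := K.indicator fun k => x ^ k / (k ! : ℝ)
  have hf : 0 ≤ f := fun k => Set.indicator_nonneg (fun k _ => by positivity) k
  let counts (w : List α) (i : α) : ℕ := w.count i
  let C := W.image counts
  have hC : C ⊆ Fintype.piFinset fun i => C.image (· i) :=
    fun c hc => Fintype.mem_piFinset.2 fun i => mem_image_of_mem _ hc
  calc ∑ w ∈ W, x ^ w.length / (w.length)!
      = ∑ c ∈ C, ∑ w ∈ W with counts w = c, x ^ w.length / (w.length)! :=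
        (sum_fiberwise_of_maps_to (fun w hw => mem_image_of_mem _ hw) _).symm
    _ ≤ ∑ c ∈ C, ∏ i, f (c i) := by
        refine sum_le_sum fun c hc => ?_
        obtain ⟨w, hw, rfl⟩ := mem_image.1 hc
        rw [prod_congr rfl fun i _ => Set.indicator_of_mem (hW w hw i) _]
        exact sum_pow_length_div_factorial_le_prod hx _ _
          fun v hv i => congrFun (mem_filter.1 hv).2 i
    _ ≤ ∑ c ∈ Fintype.piFinset fun i => C.image (· i), ∏ i, f (c i) :=
        sum_le_sum_of_subset_of_nonneg hC fun c _ _ => prod_nonneg fun i _ => hf _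
    _ = ∏ i : α, ∑ k ∈ C.image (· i), f k := (prod_univ_sum _ _).symm
    _ ≤ ∏ _i : α, a := prod_le_prod (fun i _ => sum_nonneg fun k _ => hf k)
        fun i _ => sum_le_hasSum _ (fun k _ => hf k) ha
    _ = a ^ Fintype.card α := by rw [prod_const, Finset.card_univ]

end WordCount

theorem Real.hasSum_indicator_odd_sinh (x : ℝ) :
    HasSum ({k | Odd k}.indicator fun k => x ^ k / k !) (Real.sinh x) := by
  set f := fun k : ℕ => x ^ k / (k ! : ℝ)
  have hodd : Function.Injective fun m : ℕ => 2 * m + 1 := fun a b h => by simp_all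
  refine (hodd.hasSum_iff fun k hk => Set.indicator_of_notMem (f := f) (fun hk' => ?_)).1 ?_
  · obtain ⟨m, rfl⟩ := hk'
    exact hk ⟨m, by ring⟩
  · convert Real.hasSum_sinh x using 2 with m
    exact Set.indicator_of_mem (s := {k | Odd k}) (odd_two_mul_add_one m) f

namespace cubeGraph

variable {n : ℕ}

theorem adj_iff {u v : Fin n → Bool} : (cubeGraph n).Adj u v ↔ ∃ i, ∀ j, u j ≠ v j ↔ j = i := by
  change #{j | u j ≠ v j} = 1 ↔ _
  simp [card_eq_one, Finset.ext_iff]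

theorem adj_update {u : Fin n → Bool} {i : Fin n} {b : Bool} (hb : b ≠ u i) :
    (cubeGraph n).Adj u (Function.update u i b) :=
  adj_iff.2 ⟨i, fun j => by by_cases hj : j = i <;> simp [hj, Function.update_of_ne, hb.symm]⟩

theorem preconnected : (cubeGraph n).Preconnected := by
  classical
  intro u v
  suffices h : ∀ s : Finset (Fin n), (cubeGraph n).Reachable u (s.piecewise v u) by
    simpa using h univ
  intro s
  induction s using Finset.induction_on with
  | empty => simp
  | insert i s _ ih =>
    rw [piecewise_insert]
    by_cases hb : v i = s.piecewise v u i
    · rwa [hb, Function.update_eq_self]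
    · exact ih.trans (adj_update hb).reachable

noncomputable def flipCoord {u v : Fin n → Bool} (h : (cubeGraph n).Adj u v) : Fin n :=
  (adj_iff.1 h).choose

theorem ne_iff_eq_flipCoord {u v : Fin n → Bool} (h : (cubeGraph n).Adj u v) (j : Fin n) :
    u j ≠ v j ↔ j = flipCoord h :=
  (adj_iff.1 h).choose_spec j

theorem eq_of_flipCoord_eq {u v w : Fin n → Bool} (hv : (cubeGraph n).Adj u v)
    (hw : (cubeGraph n).Adj u w) (hd : flipCoord hv = flipCoord hw) : v = w := by
  funext j
  have hv' := ne_iff_eq_flipCoord hv j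
  have hw' := hd ▸ ne_iff_eq_flipCoord hw j
  revert hv' hw'
  cases u j <;> cases v j <;> cases w j <;> simp

noncomputable def flipCoords : ∀ {u v : Fin n → Bool}, (cubeGraph n).Walk u v → List (Fin n)
  | _, _, .nil => []
  | _, _, .cons h p => flipCoord h :: flipCoords p

theorem length_flipCoords {u v : Fin n → Bool} (p : (cubeGraph n).Walk u v) :
    (flipCoords p).length = p.length := by
  induction p with
  | nil => rfl
  | cons h p ih => simp [flipCoords, ih]

theorem odd_count_flipCoords_iff {u v : Fin n → Bool} (p : (cubeGraph n).Walk u v) (i : Fin n) :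
    Odd ((flipCoords p).count i) ↔ u i ≠ v i := by
  induction p with
  | nil => simp [flipCoords]
  | @cons u w v h p ih =>
    have hi := ne_iff_eq_flipCoord h i
    simp only [flipCoords, List.count_cons, beq_iff_eq]
    by_cases hd : flipCoord h = i
    · simp only [hd, if_true, Nat.odd_add_one, ih]
      revert hi; cases u i <;> cases w i <;> cases v i <;> simp [hd]
    · simp only [hd, if_false, add_zero, ih]
      revert hi; cases u i <;> cases w i <;> simp [Ne.symm hd]

theorem flipCoords_injective {u v : Fin n → Bool} :
    Function.Injective (flipCoords : (cubeGraph n).Walk u v → List (Fin n)) := by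
  intro p q hpq
  induction p with
  | nil => cases q with
    | nil => rfl
    | cons => simp [flipCoords] at hpq
  | cons h p ih => cases q with
    | nil => simp [flipCoords] at hpq
    | cons h' q =>
      simp only [flipCoords, List.cons.injEq] at hpq
      obtain rfl := eq_of_flipCoord_eq h h' hpq.1
      rw [ih hpq.2]

theorem sum_paths_pow_div_factorial_le_sinh_pow {u v : Fin n → Bool}
    (huv : ∀ i, u i ≠ v i) [Fintype ((cubeGraph n).Path u v)] {x : ℝ} (hx : 0 ≤ x) :
    ∑ p : (cubeGraph n).Path u v, x ^ p.1.length / (p.1.length)! ≤ sinh x ^ n := by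
  calc ∑ p : (cubeGraph n).Path u v, x ^ p.1.length / (p.1.length)!
      = ∑ w ∈ univ.image fun p : (cubeGraph n).Path u v => flipCoords p.1,
          x ^ w.length / (w.length)! := by
        rw [sum_image fun p _ q _ h => Subtype.ext (flipCoords_injective h)]
        simp only [length_flipCoords]
    _ ≤ sinh x ^ Fintype.card (Fin n) := by
        refine sum_pow_length_div_factorial_le_pow hx (Real.hasSum_indicator_odd_sinh x) _ ?_
        simp only [mem_image, mem_univ, true_and, forall_exists_index, forall_apply_eq_imp_iff]
        exact fun p i => (odd_count_flipCoords_iff p.1 i).2 (huv i)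
    _ = sinh x ^ n := by rw [Fintype.card_fin]

end cubeGraph

theorem SimpleGraph.Walk.IsTrail.card_subtype_edges {V : Type*} [DecidableEq V]
    {G : SimpleGraph V} [DecidablePred (· ∈ G.edgeSet)] {u v : V} {p : G.Walk u v}
    (hp : p.IsTrail) : #(p.edges.toFinset.subtype (· ∈ G.edgeSet)) = p.length := by
  rw [card_subtype, filter_true_of_mem fun e he => p.edges_subset_edgeSet (List.mem_toFinset.1 he),
    List.toFinset_card_of_nodup hp.edges_nodup, length_edges]

open Classical in
theorem walkEnergy_eq_sum {n : ℕ} {u v : Fin n → Bool} {p : (cubeGraph n).Walk u v}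
    (hp : p.IsTrail) (ξ : (cubeGraph n).edgeSet → ℝ) :
    walkEnergy n ξ p = ∑ e ∈ p.edges.toFinset.subtype (· ∈ (cubeGraph n).edgeSet), ξ e := by
  let g (e : Sym2 (Fin n → Bool)) : ℝ := if h : e ∈ (cubeGraph n).edgeSet then ξ ⟨e, h⟩ else 0
  calc walkEnergy n ξ p = ∑ e ∈ p.edges.toFinset, g e := (List.sum_toFinset _ hp.edges_nodup).symm
    _ = ∑ e ∈ p.edges.toFinset.subtype (· ∈ (cubeGraph n).edgeSet), g e := by
        rw [sum_subtype_eq_sum_filter,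
          filter_true_of_mem fun e he => p.edges_subset_edgeSet (List.mem_toFinset.1 he)]
    _ = _ := sum_congr rfl fun e _ => dif_pos e.2

section

open Set

variable {Ω : Type*} [MeasurableSpace Ω] {μ : Measure Ω}

theorem measure_iInf_le_le_sum {ι α : Type*} [Fintype ι] [Nonempty ι]
    [ConditionallyCompleteLinearOrder α] (f : ι → Ω → α) (x : α) :
    μ {ω | ⨅ i, f i ω ≤ x} ≤ ∑ i, μ {ω | f i ω ≤ x} := by
  refine (measure_mono fun ω hω => ?_).trans (measure_iUnion_fintype_le μ _)
  obtain ⟨i, hi⟩ := exists_eq_ciInf_of_finite (f := fun i => f i ω)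
  exact mem_iUnion.2 ⟨i, show f i ω ≤ x from hi ▸ hω⟩

theorem ProbabilityTheory.expMeasure_one_le_restrict_Ici :
    expMeasure 1 ≤ volume.restrict (Ici (0 : ℝ)) := by
  change volume.withDensity (exponentialPDF 1) ≤ _
  rw [← withDensity_indicator_one measurableSet_Ici]
  refine withDensity_mono (Filter.Eventually.of_forall fun a => ?_)
  by_cases ha : 0 ≤ a
  · rw [exponentialPDF_of_nonneg ha, indicator_of_mem (Set.mem_Ici.2 ha), Pi.one_apply,
      ENNReal.ofReal_le_one, one_mul, Real.exp_le_one_iff]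
    linarith
  · simp [exponentialPDF_of_neg (not_le.1 ha), ha]

theorem ae_nonneg_of_map_le_restrict_Ici {X : Ω → ℝ} (hX : Measurable X)
    (hlaw : μ.map X ≤ volume.restrict (Ici 0)) : ∀ᵐ ω ∂μ, 0 ≤ X ω := by
  rw [ae_iff]
  refine le_antisymm ?_ zero_le
  calc μ {ω | ¬ 0 ≤ X ω} = μ.map X (Iio 0) := by
        rw [Measure.map_apply hX measurableSet_Iio]; simp [Set.preimage, not_le]
    _ ≤ volume.restrict (Ici 0) (Iio 0) := hlaw _
    _ = 0 := by simp [Measure.restrict_apply measurableSet_Iio, Iio_inter_Ici]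

theorem integral_sub_pow_div_factorial (y : ℝ) (k : ℕ) :
    ∫ a in (0 : ℝ)..y, (y - a) ^ k / k ! = y ^ (k + 1) / (k + 1)! := by
  rw [intervalIntegral.integral_div, intervalIntegral.integral_comp_sub_left (fun a => a ^ k),
    sub_self, sub_zero, integral_pow, Nat.factorial_succ]
  push_cast
  field_simp
  ring

theorem lintegral_Icc_sub_pow_div_factorial {y : ℝ} (hy : 0 ≤ y) (k : ℕ) :
    ∫⁻ a in Icc 0 y, ENNReal.ofReal ((y - a) ^ k / k !) =
      ENNReal.ofReal (y ^ (k + 1) / (k + 1)!) := by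
  rw [← ofReal_integral_eq_lintegral_ofReal, integral_Icc_eq_integral_Ioc,
    ← intervalIntegral.integral_of_le hy, integral_sub_pow_div_factorial]
  · exact (by fun_prop : Continuous fun a : ℝ => (y - a) ^ k / k !).integrableOn_Icc
  · filter_upwards [ae_restrict_mem measurableSet_Icc] with a ha
    have : 0 ≤ y - a := sub_nonneg.2 ha.2
    positivity

theorem ProbabilityTheory.IndepFun.measure_add_le_le_pow_succ_div_factorial
    [IsProbabilityMeasure μ] {X S : Ω → ℝ} (hX : Measurable X) (hS : Measurable S)
    (hXS : IndepFun X S μ) (hlaw : μ.map X ≤ volume.restrict (Ici 0)) (hS₀ : ∀ᵐ ω ∂μ, 0 ≤ S ω)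
    {k : ℕ}
    (hSk : ∀ t, 0 ≤ t → μ {ω | S ω ≤ t} ≤ ENNReal.ofReal (t ^ k / k !)) {y : ℝ} (hy : 0 ≤ y) :
    μ {ω | X ω + S ω ≤ y} ≤ ENNReal.ofReal (y ^ (k + 1) / (k + 1)!) := by
  have hsum : MeasurableSet {p : ℝ × ℝ | p.1 + p.2 ≤ y} :=
    measurableSet_le (measurable_fst.add measurable_snd) measurable_const
  have hbound (a : ℝ) : μ.map S (Iic (y - a)) ≤
      (Iic y).indicator (fun a => ENNReal.ofReal ((y - a) ^ k / k !)) a := by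
    rw [Measure.map_apply hS measurableSet_Iic]
    by_cases ha : a ≤ y
    · rw [indicator_of_mem (Set.mem_Iic.2 ha)]
      exact hSk _ (sub_nonneg.2 ha)
    · rw [indicator_of_notMem (mt Set.mem_Iic.1 ha)]
      refine (measure_mono_null (fun ω hω => ?_) (ae_iff.1 hS₀)).le
      exact not_le.2 ((Set.mem_Iic.1 hω).trans_lt (by linarith))
  calc μ {ω | X ω + S ω ≤ y} = (μ.map X).prod (μ.map S) {p | p.1 + p.2 ≤ y} := by
        rw [← (indepFun_iff_map_prod_eq_prod_map_map hX.aemeasurable hS.aemeasurable).1 hXS,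
          Measure.map_apply (hX.prodMk hS) hsum]
        rfl
    _ = ∫⁻ a, μ.map S (Iic (y - a)) ∂μ.map X := by
        rw [Measure.prod_apply hsum]
        congr with a
        congr with b
        simp [add_comm a, le_sub_iff_add_le]
    _ ≤ ∫⁻ a, (Iic y).indicator (fun a => ENNReal.ofReal ((y - a) ^ k / k !)) a
          ∂volume.restrict (Ici 0) := lintegral_mono' hlaw hbound
    _ = ENNReal.ofReal (y ^ (k + 1) / (k + 1)!) := by
        rw [lintegral_indicator measurableSet_Iic, Measure.restrict_restrict measurableSet_Iic,
          Iic_inter_Ici, lintegral_Icc_sub_pow_div_factorial hy]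

theorem ProbabilityTheory.iIndepFun.measure_sum_le_le_pow_div_factorial
    [IsProbabilityMeasure μ] {ι : Type*} {ξ : ι → Ω → ℝ} (hindep : iIndepFun ξ μ)
    (hmeas : ∀ i, Measurable (ξ i))
    (hlaw : ∀ i, μ.map (ξ i) ≤ volume.restrict (Ici 0)) (T : Finset ι) {y : ℝ} (hy : 0 ≤ y) :
    μ {ω | ∑ i ∈ T, ξ i ω ≤ y} ≤ ENNReal.ofReal (y ^ #T / (#T)!) := by
  classical
  induction T using Finset.induction_on generalizing y with
  | empty => simpa using prob_le_one
  | insert i T hi ih =>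
    simp_rw [sum_insert hi, card_insert_of_notMem hi]
    have hS₀ : ∀ᵐ ω ∂μ, 0 ≤ ∑ j ∈ T, ξ j ω := by
      filter_upwards [(Filter.eventually_all_finset T).2
        fun j _ => ae_nonneg_of_map_le_restrict_Ici (hmeas j) (hlaw j)] with ω hω
      exact sum_nonneg hω
    have hXS : IndepFun (ξ i) (fun ω => ∑ j ∈ T, ξ j ω) μ := by
      simpa [Finset.sum_fn] using (hindep.indepFun_finsetSum_of_notMem hmeas hi).symm
    exact hXS.measure_add_le_le_pow_succ_div_factorial (hmeas i)
      (Finset.measurable_sum _ fun j _ => hmeas j) (hlaw i) hS₀ (fun t ht => ih ht) hy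

theorem measure_walkEnergy_le_le_pow_div_factorial [IsProbabilityMeasure μ] {n : ℕ}
    {ξ : (cubeGraph n).edgeSet → Ω → ℝ} (hindep : iIndepFun ξ μ) (hmeas : ∀ e, Measurable (ξ e))
    (hlaw : ∀ e, μ.map (ξ e) ≤ volume.restrict (Ici 0)) {u v : Fin n → Bool}
    {p : (cubeGraph n).Walk u v} (hp : p.IsTrail) {x : ℝ} (hx : 0 ≤ x) :
    μ {ω | walkEnergy n (fun e => ξ e ω) p ≤ x} ≤ ENNReal.ofReal (x ^ p.length / p.length !) := by
  classical
  have h := hindep.measure_sum_le_le_pow_div_factorial hmeas hlaw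
    (p.edges.toFinset.subtype (· ∈ (cubeGraph n).edgeSet)) hx
  rw [hp.card_subtype_edges] at h
  simpa only [walkEnergy_eq_sum hp] using h

end

theorem ground_state_lower_tail_general
    {Ω : Type*} [MeasurableSpace Ω] (μ : Measure Ω) [IsProbabilityMeasure μ]
    (n : ℕ)
    (ξ : (cubeGraph n).edgeSet → Ω → ℝ) (hmeas : ∀ e, Measurable (ξ e))
    (hindep : iIndepFun ξ μ)
    (hexp : ∀ e, μ.map (ξ e) = expMeasure 1)
    (x : ℝ) (hx : 0 < x) :
    (μ {ω | minEnergy n (fun e => ξ e ω) ≤ x}).toReal ≤ (1 + x) * Real.sinh x ^ n := by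
  classical
  have : Nonempty ((cubeGraph n).Path (vZero n) (vOne n)) :=
    ⟨(cubeGraph.preconnected _ _).some.toPath⟩
  have hlaw e := (hexp e).trans_le expMeasure_one_le_restrict_Ici
  have hsinh : 0 ≤ sinh x ^ n := pow_nonneg (sinh_nonneg_iff.2 hx.le) n
  have hbound : μ {ω | minEnergy n (fun e => ξ e ω) ≤ x} ≤ ENNReal.ofReal (sinh x ^ n) :=
    calc μ {ω | minEnergy n (fun e => ξ e ω) ≤ x}
        ≤ ∑ p : (cubeGraph n).Path (vZero n) (vOne n),
            μ {ω | walkEnergy n (fun e => ξ e ω) p.1 ≤ x} := measure_iInf_le_le_sum _ x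
      _ ≤ ∑ p : (cubeGraph n).Path (vZero n) (vOne n),
            ENNReal.ofReal (x ^ p.1.length / (p.1.length)!) := sum_le_sum fun p _ =>
          measure_walkEnergy_le_le_pow_div_factorial hindep hmeas hlaw p.2.isTrail hx.le
      _ = ENNReal.ofReal (∑ p : (cubeGraph n).Path (vZero n) (vOne n),
            x ^ p.1.length / (p.1.length)!) :=
          (ENNReal.ofReal_sum_of_nonneg fun p _ => by positivity).symm
      _ ≤ ENNReal.ofReal (sinh x ^ n) := ENNReal.ofReal_le_ofReal <|
          cubeGraph.sum_paths_pow_div_factorial_le_sinh_pow (fun _ => by simp [vZero, vOne]) hx.le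
  calc (μ {ω | minEnergy n (fun e => ξ e ω) ≤ x}).toReal ≤ sinh x ^ n :=
        ENNReal.toReal_le_of_le_ofReal hsinh hbound
    _ ≤ (1 + x) * sinh x ^ n := le_mul_of_one_le_left hsinh (by linarith)

/-- If the edges of `Q_n` (`n ≥ 1`) carry i.i.d. rate-1 exponential weights, then the minimal
energy `m_n` over self-avoiding paths from `0` to `1` satisfies
`P(m_n ≤ x) ≤ (1 + x) · sinh(x)^n` for every `x > 0`. -/
theorem ground_state_lower_tail
    {Ω : Type*} [MeasurableSpace Ω] (μ : Measure Ω) [IsProbabilityMeasure μ]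
    (n : ℕ) (hn : 1 ≤ n)
    (ξ : (cubeGraph n).edgeSet → Ω → ℝ) (hmeas : ∀ e, Measurable (ξ e))
    (hindep : iIndepFun ξ μ)
    (hexp : ∀ e, μ.map (ξ e) = expMeasure 1)
    (x : ℝ) (hx : 0 < x) :
    (μ {ω | minEnergy n (fun e => ξ e ω) ≤ x}).toReal ≤ (1 + x) * Real.sinh x ^ n :=
  ground_state_lower_tail_general μ n ξ hmeas hindep hexp x hx
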